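/- arXiv:2206.12548 — 3 statements merged into one kernel-verified Lean document; each statement's English description precedes it below -/
import Mathlib

section
/- Let n ≥ 1, 0 < β < 1 and -β ≤ α ≤ β. Then for all x, y in the open unit ball B₁ ⊂ ℝⁿ with x ≠ y, one has min{ [((1-|x|)(1-|y|))/|x-y|²]^β , 1 } ≤ 4 ((1-|y|)/(1-|x|))^α. -/
open Metric

private lemma auxL (a b d β : ℝ) (ha : 0 < a) (hb : 0 < b) (hd : 0 < d)
    (hdab : a - b ≤ d) (hβ0 : 0 < β) (hβ1 : β ≤ 1) :
    min ((a * b / d ^ 2) ^ β) 1 ≤ 4 * (b / a) ^ β := by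
  rcases le_or_gt (a / 2) b with h | h
  · have h1 : (1:ℝ)/2 ≤ b / a := by
      rw [div_le_div_iff₀ (by norm_num) ha]; linarith
    have h2 : ((1:ℝ)/2) ^ β ≤ (b / a) ^ β :=
      Real.rpow_le_rpow (by norm_num) h1 hβ0.le
    have h3 : (1:ℝ)/2 ≤ ((1:ℝ)/2) ^ β := by
      calc (1:ℝ)/2 = ((1:ℝ)/2) ^ (1:ℝ) := by norm_num
      _ ≤ ((1:ℝ)/2) ^ β := Real.rpow_le_rpow_of_exponent_ge (by norm_num) (by norm_num) hβ1
    calc min ((a * b / d ^ 2) ^ β) 1 ≤ 1 := min_le_right _ _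
    _ ≤ 4 * (b / a) ^ β := by nlinarith
  · have hd2 : a / 2 < d := by linarith
    have hkey : a * b / d ^ 2 ≤ 4 * (b / a) := by
      rw [show (4:ℝ) * (b / a) = 4 * b / a by ring, div_le_div_iff₀ (by positivity) ha]
      have h5 : (a/2)^2 ≤ d^2 := by nlinarith
      nlinarith [mul_le_mul_of_nonneg_left h5 hb.le]
    have hpos : 0 < a * b / d ^ 2 := by positivity
    calc min ((a * b / d ^ 2) ^ β) 1 ≤ (a * b / d ^ 2) ^ β := min_le_left _ _
    _ ≤ (4 * (b / a)) ^ β := Real.rpow_le_rpow hpos.le hkey hβ0.le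
    _ = 4 ^ β * (b / a) ^ β := Real.mul_rpow (by norm_num) (by positivity)
    _ ≤ 4 * (b / a) ^ β := by
        have h4 : (4:ℝ) ^ β ≤ 4 := by
          calc (4:ℝ) ^ β ≤ 4 ^ (1:ℝ) :=
            Real.rpow_le_rpow_of_exponent_le (by norm_num) hβ1
          _ = 4 := by norm_num
        have : (0:ℝ) ≤ (b / a) ^ β := by positivity
        nlinarith

/-- Let `n ≥ 1`, `0 < β < 1` and `-β ≤ α ≤ β`. Then for all `x, y` in the
open unit ball of `ℝⁿ` with `x ≠ y`,
`min (((1-|x|)(1-|y|))/|x-y|²)^β 1 ≤ 4 ((1-|y|)/(1-|x|))^α`. -/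
theorem stmt0 (n : ℕ) (hn : 1 ≤ n) (α β : ℝ) (hβ0 : 0 < β) (hβ1 : β < 1)
    (hα1 : -β ≤ α) (hα2 : α ≤ β)
    (x y : EuclideanSpace ℝ (Fin n))
    (hx : x ∈ ball (0 : EuclideanSpace ℝ (Fin n)) 1)
    (hy : y ∈ ball (0 : EuclideanSpace ℝ (Fin n)) 1) (hxy : x ≠ y) :
    min ((((1 - ‖x‖) * (1 - ‖y‖)) / ‖x - y‖ ^ 2) ^ β) 1
      ≤ 4 * ((1 - ‖y‖) / (1 - ‖x‖)) ^ α := by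
  set a := 1 - ‖x‖ with ha_def
  set b := 1 - ‖y‖ with hb_def
  set d := ‖x - y‖ with hd_def
  have hxn : ‖x‖ < 1 := by simpa using hx
  have hyn : ‖y‖ < 1 := by simpa using hy
  have ha : 0 < a := by simp [ha_def]; linarith
  have hb : 0 < b := by simp [hb_def]; linarith
  have hd : 0 < d := by
    rw [hd_def]; exact norm_sub_pos_iff.mpr hxy
  have hab : |a - b| ≤ d := by
    have := abs_norm_sub_norm_le y x
    rw [norm_sub_rev] at this
    calc |a - b| = |‖y‖ - ‖x‖| := by rw [ha_def, hb_def]; ring_nf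
    _ ≤ d := this
  obtain ⟨hl, h1⟩ := abs_le.mp hab
  have h2 : b - a ≤ d := by linarith
  set t := b / a with ht_def
  have ht : 0 < t := div_pos hb ha
  -- t^α ≥ min (t^β) ((a/b)^β)
  have hmain : min (t ^ β) ((a / b) ^ β) ≤ t ^ α := by
    rcases le_total t 1 with hle | hge
    · calc min (t ^ β) ((a / b) ^ β) ≤ t ^ β := min_le_left _ _
      _ ≤ t ^ α := Real.rpow_le_rpow_of_exponent_ge ht hle hα2
    · have : (a / b) ^ β = t ^ (-β) := by
        rw [Real.rpow_neg ht.le, ht_def, ← Real.inv_rpow (by positivity), inv_div]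
      calc min (t ^ β) ((a / b) ^ β) ≤ (a / b) ^ β := min_le_right _ _
      _ = t ^ (-β) := this
      _ ≤ t ^ α := Real.rpow_le_rpow_of_exponent_le hge hα1
  have L1 : min ((a * b / d ^ 2) ^ β) 1 ≤ 4 * t ^ β :=
    auxL a b d β ha hb hd h1 hβ0 hβ1.le
  have L2 : min ((a * b / d ^ 2) ^ β) 1 ≤ 4 * (a / b) ^ β := by
    have := auxL b a d β hb ha hd h2 hβ0 hβ1.le
    calc min ((a * b / d ^ 2) ^ β) 1 = min ((b * a / d ^ 2) ^ β) 1 := by rw [mul_comm]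
    _ ≤ 4 * (a / b) ^ β := this
  calc min ((a * b / d ^ 2) ^ β) 1 ≤ 4 * min (t ^ β) ((a / b) ^ β) := by
        rcases min_cases (t ^ β) ((a / b) ^ β) with ⟨heq, _⟩ | ⟨heq, _⟩ <;> rw [heq]
        · exact L1
        · exact L2
  _ ≤ 4 * t ^ α := by nlinarith [hmain]
end

section
/- Let 0 < s < 1 and n > 2s. There exists a constant C > 0 depending only on n and s such that for all x, y ∈ B₁ with x ≠ y, G(x,y) ≤ C |x-y|^{2s-n} min{ [((1-|x|)(1-|y|))/|x-y|²]^s , 1 }. -/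
open Metric MeasureTheory
open Real


-- f t = t^(s-1) * (1+t)^c, c ≤ 0
lemma aux_intble {s c : ℝ} (hs0 : 0 < s) (hs1 : s < 1) (hc : c ≤ 0) (ρ : ℝ) (hρ : 0 ≤ ρ) :
    IntervalIntegrable (fun t : ℝ => t ^ (s-1) * (1+t) ^ c) volume 0 ρ := by
  apply (intervalIntegral.intervalIntegrable_rpow' (r := s-1) (by linarith)).mono_fun
  · apply Measurable.aestronglyMeasurable; fun_prop
  · filter_upwards [MeasureTheory.ae_restrict_mem measurableSet_Ioc] with t ht
    rw [Set.uIoc_of_le hρ] at ht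
    have h1 : (0:ℝ) ≤ t := le_of_lt ht.1
    have h2 : (1+t) ^ c ≤ 1 := rpow_le_one_of_one_le_of_nonpos (by linarith) hc
    have h3 : (0:ℝ) ≤ t ^ (s-1) := rpow_nonneg h1 _
    have h4 : (0:ℝ) ≤ (1+t) ^ c := rpow_nonneg (by linarith) _
    simp only [norm_mul, Real.norm_rpow_of_nonneg h1, Real.norm_rpow_of_nonneg (by linarith : (0:ℝ) ≤ 1+t), Real.norm_eq_abs, abs_of_nonneg h3, abs_of_nonneg h1, abs_of_nonneg (by linarith : (0:ℝ) ≤ 1+t)]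
    calc t ^ (s-1) * (1+t) ^ c ≤ t ^ (s-1) * 1 := by nlinarith
      _ = t ^ (s-1) := mul_one _

lemma aux_le {s c : ℝ} (hs0 : 0 < s) (hs1 : s < 1) (hc : c ≤ 0) (ρ : ℝ) (hρ : 0 ≤ ρ) :
    (∫ t in (0:ℝ)..ρ, t ^ (s-1) * (1+t) ^ c) ≤ ρ ^ s / s := by
  have h := intervalIntegral.integral_mono_on hρ (aux_intble hs0 hs1 hc ρ hρ)
    (intervalIntegral.intervalIntegrable_rpow' (r := s-1) (by linarith)) ?_
  · calc (∫ t in (0:ℝ)..ρ, t ^ (s-1) * (1+t) ^ c) ≤ ∫ t in (0:ℝ)..ρ, t ^ (s-1) := h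
      _ = (ρ ^ (s-1+1) - 0 ^ (s-1+1)) / (s-1+1) := integral_rpow (Or.inl (by linarith))
      _ = ρ ^ s / s := by rw [zero_rpow (by linarith), sub_add_cancel]; ring_nf
  · intro t ht
    have h1 : (0:ℝ) ≤ t := ht.1
    have h2 : (1+t) ^ c ≤ 1 := rpow_le_one_of_one_le_of_nonpos (by linarith) hc
    have h3 : (0:ℝ) ≤ t ^ (s-1) := rpow_nonneg h1 _
    nlinarith

lemma aux_tail {s c : ℝ} (hs0 : 0 < s) (hsc : s + c < 0) (hc : c ≤ 0) (ρ : ℝ) (hρ : 1 ≤ ρ) :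
    (∫ t in (1:ℝ)..ρ, t ^ (s-1) * (1+t) ^ c) ≤ 1 / (-(s+c)) := by
  have hg : IntervalIntegrable (fun t : ℝ => t ^ (s-1+c)) volume 1 ρ := by
    apply ContinuousOn.intervalIntegrable
    rw [Set.uIcc_of_le hρ]
    exact fun t ht => (Real.continuousAt_rpow_const t _ (Or.inl (by linarith [ht.1]))).continuousWithinAt
  have hbd : ∀ t ∈ Set.Icc (1:ℝ) ρ, t ^ (s-1) * (1+t) ^ c ≤ t ^ (s-1+c) := by
    intro t ht
    have ht0 : (0:ℝ) < t := by linarith [ht.1]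
    have h2 : (1+t) ^ c ≤ t ^ c := rpow_le_rpow_of_nonpos ht0 (by linarith) hc
    have h3 : (0:ℝ) ≤ t ^ (s-1) := rpow_nonneg ht0.le _
    calc t ^ (s-1) * (1+t) ^ c ≤ t ^ (s-1) * t ^ c := by nlinarith
      _ = t ^ (s-1+c) := (Real.rpow_add ht0 _ _).symm
  have hf : IntervalIntegrable (fun t : ℝ => t ^ (s-1) * (1+t) ^ c) volume 1 ρ := by
    apply hg.mono_fun (Measurable.aestronglyMeasurable (by fun_prop))
    filter_upwards [MeasureTheory.ae_restrict_mem measurableSet_Ioc] with t ht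
    rw [Set.uIoc_of_le hρ] at ht
    have ht0 : (0:ℝ) < t := by linarith [ht.1]
    have h3 : (0:ℝ) ≤ t ^ (s-1) := rpow_nonneg ht0.le _
    have h4 : (0:ℝ) ≤ (1+t) ^ c := rpow_nonneg (by linarith) _
    have h5 : (0:ℝ) ≤ t ^ (s-1+c) := rpow_nonneg ht0.le _
    simp only [Real.norm_eq_abs, abs_of_nonneg (mul_nonneg h3 h4), abs_of_nonneg h5]
    exact hbd t ⟨ht.1.le, ht.2⟩
  calc (∫ t in (1:ℝ)..ρ, t ^ (s-1) * (1+t) ^ c) ≤ ∫ t in (1:ℝ)..ρ, t ^ (s-1+c) :=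
        intervalIntegral.integral_mono_on hρ hf hg hbd
    _ = (ρ ^ (s-1+c+1) - 1 ^ (s-1+c+1)) / (s-1+c+1) :=
        integral_rpow (Or.inr ⟨by intro h; rw [show s-1+c = -1 ↔ s+c = 0 by constructor <;> intro <;> linarith] at h; linarith,
          by rw [Set.uIcc_of_le hρ]; intro h; linarith [h.1]⟩)
    _ ≤ 1 / (-(s+c)) := by
        rw [Real.one_rpow]
        have h1 : ρ ^ (s-1+c+1) ≤ 1 := rpow_le_one_of_one_le_of_nonpos hρ (by linarith)
        have h2 : (0:ℝ) ≤ ρ ^ (s-1+c+1) := rpow_nonneg (by linarith) _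
        rw [show (ρ ^ (s-1+c+1) - 1) / (s-1+c+1) = (1 - ρ ^ (s-1+c+1)) / (-(s+c)) by
          rw [show s-1+c+1 = s+c by ring]; rw [div_eq_div_iff (by linarith) (by linarith)]; ring]
        rw [div_le_div_iff₀ (by linarith) (by linarith)]
        nlinarith



/-- The Green-type kernel
`G(x,y) = |x-y|^{2s-n} ∫₀^{ρ(x,y)} t^{s-1} (1+t)^{-n/2} dt` with
`ρ(x,y) = (1-|x|²)(1-|y|²)/|x-y|²`. -/
noncomputable def greenKer (n : ℕ) (s : ℝ) (x y : EuclideanSpace ℝ (Fin n)) : ℝ :=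
  ‖x - y‖ ^ (2 * s - (n : ℝ)) *
    ∫ t in (0 : ℝ)..((1 - ‖x‖ ^ 2) * (1 - ‖y‖ ^ 2) / ‖x - y‖ ^ 2),
      t ^ (s - 1) * (1 + t) ^ (-(n : ℝ) / 2)

set_option maxHeartbeats 1000000 in
/-- Let `0 < s < 1` and `n > 2s`. There is `C > 0` depending only on `n, s`
such that for all `x, y ∈ B₁` with `x ≠ y`,
`G(x,y) ≤ C |x-y|^{2s-n} min (((1-|x|)(1-|y|))/|x-y|²)^s 1`. -/
theorem stmt3 (n : ℕ) (s : ℝ) (hs0 : 0 < s) (hs1 : s < 1) (hn : 2 * s < (n : ℝ)) :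
    ∃ C : ℝ, 0 < C ∧ ∀ x y : EuclideanSpace ℝ (Fin n),
      x ∈ ball (0 : EuclideanSpace ℝ (Fin n)) 1 →
      y ∈ ball (0 : EuclideanSpace ℝ (Fin n)) 1 → x ≠ y →
      greenKer n s x y ≤
        C * ‖x - y‖ ^ (2 * s - (n : ℝ)) *
          min ((((1 - ‖x‖) * (1 - ‖y‖)) / ‖x - y‖ ^ 2) ^ s) 1 := by
  have hc : -(n:ℝ)/2 ≤ 0 := by
    have : (0:ℝ) ≤ (n:ℝ) := Nat.cast_nonneg n
    linarith
  have hsc : s + -(n:ℝ)/2 < 0 := by linarith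
  have hns : (0:ℝ) < (n:ℝ)/2 - s := by linarith
  set B : ℝ := 1 / s + 1 / ((n:ℝ)/2 - s) with hBdef
  have hB : 0 < B := by positivity
  have hC4s : (0:ℝ) < 4 / s := by positivity
  refine ⟨4 / s + 4 * B, by positivity, ?_⟩
  intro x y hx hy hxy
  simp only [greenKer]
  have hx1 : ‖x‖ < 1 := mem_ball_zero_iff.mp hx
  have hy1 : ‖y‖ < 1 := mem_ball_zero_iff.mp hy
  have hx0 : (0:ℝ) ≤ ‖x‖ := norm_nonneg x
  have hy0 : (0:ℝ) ≤ ‖y‖ := norm_nonneg y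
  have hD : (0:ℝ) < ‖x - y‖ := norm_sub_pos_iff.mpr hxy
  set D : ℝ := ‖x - y‖ with hDdef
  have hD2 : (0:ℝ) < D ^ 2 := pow_pos hD 2
  set ρ : ℝ := (1 - ‖x‖ ^ 2) * (1 - ‖y‖ ^ 2) / D ^ 2 with hρdef
  set r : ℝ := (1 - ‖x‖) * (1 - ‖y‖) / D ^ 2 with hrdef
  have hρ : 0 < ρ := by
    rw [hρdef]
    exact div_pos (mul_pos (by nlinarith) (by nlinarith)) hD2
  have hr : 0 < r := by
    rw [hrdef]
    exact div_pos (mul_pos (by nlinarith) (by nlinarith)) hD2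
  have hnum : (1 - ‖x‖ ^ 2) * (1 - ‖y‖ ^ 2) ≤ 4 * ((1 - ‖x‖) * (1 - ‖y‖)) := by
    have e : (1 - ‖x‖ ^ 2) * (1 - ‖y‖ ^ 2)
        = (1 - ‖x‖) * (1 - ‖y‖) * ((1 + ‖x‖) * (1 + ‖y‖)) := by ring
    rw [e]
    have h4 : (1 + ‖x‖) * (1 + ‖y‖) ≤ 4 := by nlinarith
    have h12 : 0 ≤ (1 - ‖x‖) * (1 - ‖y‖) := by nlinarith
    nlinarith
  have hρ4r : ρ ≤ 4 * r := by
    rw [hρdef, hrdef, ← mul_div_assoc, div_le_div_iff₀ hD2 hD2]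
    nlinarith
  have hρrs : ρ ^ s ≤ 4 * r ^ s := by
    calc ρ ^ s ≤ (4 * r) ^ s := Real.rpow_le_rpow hρ.le hρ4r hs0.le
      _ = 4 ^ s * r ^ s := Real.mul_rpow (by norm_num) hr.le
      _ ≤ 4 * r ^ s := by
          have h1 : (4:ℝ) ^ s ≤ 4 ^ (1:ℝ) :=
            Real.rpow_le_rpow_of_exponent_le (by norm_num) hs1.le
          rw [Real.rpow_one] at h1
          have h2 := Real.rpow_nonneg hr.le s
          nlinarith
  set M : ℝ := min (r ^ s) 1 with hMdef
  have hM0 : 0 < M := lt_min (Real.rpow_pos_of_pos hr s) one_pos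
  clear_value B D ρ r M
  have key : (∫ t in (0:ℝ)..ρ, t ^ (s-1) * (1+t) ^ (-(n:ℝ)/2)) ≤ (4 / s + 4 * B) * M := by
    rcases le_or_gt ρ 1 with hcase | hcase
    · have h1 : (∫ t in (0:ℝ)..ρ, t ^ (s-1) * (1+t) ^ (-(n:ℝ)/2)) ≤ ρ ^ s / s :=
        aux_le hs0 hs1 hc ρ hρ.le
      have h2 : ρ ^ s ≤ 1 := Real.rpow_le_one hρ.le hcase hs0.le
      have h3 : ρ ^ s / s ≤ (4 / s) * M := by
        rcases min_cases (r ^ s) 1 with ⟨hm, _⟩ | ⟨hm, _⟩ <;> rw [hMdef, hm]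
        · rw [div_le_iff₀ hs0]
          have e : 4 / s * r ^ s * s = 4 * r ^ s := by field_simp
          rw [e]; exact hρrs
        · rw [mul_one, div_le_div_iff₀ hs0 hs0]; nlinarith
      calc (∫ t in (0:ℝ)..ρ, t ^ (s-1) * (1+t) ^ (-(n:ℝ)/2)) ≤ (4/s) * M := h1.trans h3
        _ ≤ (4 / s + 4 * B) * M :=
            mul_le_mul_of_nonneg_right (by linarith) hM0.le
    · have hint01 : IntervalIntegrable (fun t : ℝ => t ^ (s-1) * (1+t) ^ (-(n:ℝ)/2)) volume 0 1 :=
        aux_intble hs0 hs1 hc 1 zero_le_one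
      have hint0ρ : IntervalIntegrable (fun t : ℝ => t ^ (s-1) * (1+t) ^ (-(n:ℝ)/2)) volume 0 ρ :=
        aux_intble hs0 hs1 hc ρ hρ.le
      have hint1ρ : IntervalIntegrable (fun t : ℝ => t ^ (s-1) * (1+t) ^ (-(n:ℝ)/2)) volume 1 ρ :=
        hint0ρ.mono_set (Set.uIcc_subset_uIcc
          (by rw [Set.uIcc_of_le hρ.le]; exact ⟨by linarith, by linarith⟩)
          Set.right_mem_uIcc)
      have hsplit : (∫ t in (0:ℝ)..ρ, t ^ (s-1) * (1+t) ^ (-(n:ℝ)/2))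
          = (∫ t in (0:ℝ)..1, t ^ (s-1) * (1+t) ^ (-(n:ℝ)/2))
            + ∫ t in (1:ℝ)..ρ, t ^ (s-1) * (1+t) ^ (-(n:ℝ)/2) :=
        (intervalIntegral.integral_add_adjacent_intervals hint01 hint1ρ).symm
      have h01 : (∫ t in (0:ℝ)..1, t ^ (s-1) * (1+t) ^ (-(n:ℝ)/2)) ≤ 1 / s := by
        have := aux_le hs0 hs1 hc 1 zero_le_one
        rwa [Real.one_rpow] at this
      have h1ρ : (∫ t in (1:ℝ)..ρ, t ^ (s-1) * (1+t) ^ (-(n:ℝ)/2)) ≤ 1 / ((n:ℝ)/2 - s) := by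
        have := aux_tail hs0 hsc hc ρ hcase.le
        rwa [show -(s + -(n:ℝ)/2) = (n:ℝ)/2 - s by ring] at this
      have hIB : (∫ t in (0:ℝ)..ρ, t ^ (s-1) * (1+t) ^ (-(n:ℝ)/2)) ≤ B := by
        rw [hsplit, hBdef]; linarith
      have hr4 : 1/4 < r := by nlinarith
      have hrs4 : (1:ℝ)/4 ≤ r ^ s := by
        rcases le_or_gt 1 r with h | h
        · have := Real.one_le_rpow h hs0.le
          linarith
        · have h5 : r ^ (1:ℝ) ≤ r ^ s :=
            Real.rpow_le_rpow_of_exponent_ge hr h.le hs1.le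
          rw [Real.rpow_one] at h5
          linarith
      have hM4 : (1:ℝ)/4 ≤ M := by rw [hMdef]; exact le_min hrs4 (by norm_num)
      calc (∫ t in (0:ℝ)..ρ, t ^ (s-1) * (1+t) ^ (-(n:ℝ)/2)) ≤ B := hIB
        _ = 4 * B * (1/4) := by ring
        _ ≤ 4 * B * M := mul_le_mul_of_nonneg_left hM4 (by positivity)
        _ ≤ (4 / s + 4 * B) * M :=
            mul_le_mul_of_nonneg_right (by linarith) hM0.le
  have hDs : (0:ℝ) ≤ D ^ (2 * s - (n:ℝ)) := Real.rpow_nonneg hD.le _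
  calc D ^ (2 * s - (n:ℝ)) * ∫ t in (0:ℝ)..ρ, t ^ (s-1) * (1+t) ^ (-(n:ℝ)/2)
      ≤ D ^ (2 * s - (n:ℝ)) * ((4 / s + 4 * B) * M) :=
        mul_le_mul_of_nonneg_left key hDs
    _ = (4 / s + 4 * B) * D ^ (2 * s - (n:ℝ)) * M := by ring
end

section
/- Let 0 < s < 1 and n > 2s. There exists a constant C > 0 depending only on n and s such that for every measurable f : B₁ → ℝ with ∫_{B₁} (1-|y|)^s |f(y)| dy < ∞, the Green potential satisfies ∫_{B₁} |(G*f)(x)| dx ≤ C ∫_{B₁} (1-|y|)^s |f(y)| dy. -/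
/-!
With `d = 1 - ‖y‖` and `r = ‖x - y‖`, the kernel satisfies `0 ≤ G(x,y) ≤ K d^s r^(s-n)`. Indeed
`ρ ≤ 4τ(τ+1)` for `τ = d/r`: if `τ ≥ 1` the `t`-integral is at most its value over `(0, ∞)`,
finite because `n > 2s`, while if `τ < 1` it is at most `ρ^s/s ≤ 8^s τ^s/s`. As `r^(s-n)` is
integrable over balls, `∫_{B₁} G(x,y) dx ≤ C (1 - ‖y‖)^s`, and Tonelli gives the estimate.
-/

open Metric MeasureTheory

open Set Real
open scoped ENNReal

theorem MeasureTheory.integral_abs_integral_mul_le {α β : Type*} [MeasurableSpace α]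
    [MeasurableSpace β] {μ : Measure α} {ν : Measure β} [SFinite μ] [SFinite ν]
    {k : α → β → ℝ} {f w : β → ℝ} (hk : AEMeasurable (Function.uncurry k) (μ.prod ν))
    (hf : AEMeasurable f ν) (hkw : ∀ᵐ y ∂ν, ∫⁻ x, ‖k x y‖ₑ ∂μ ≤ ENNReal.ofReal (w y))
    (hw : 0 ≤ᵐ[ν] w) (hwf : Integrable (fun y => w y * |f y|) ν) :
    ∫ x, |∫ y, k x y * f y ∂ν| ∂μ ≤ ∫ y, w y * |f y| ∂ν := by
  have hwf0 : 0 ≤ᵐ[ν] fun y => w y * |f y| := hw.mono fun y hy => mul_nonneg hy (abs_nonneg _)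
  have hinner : ∀ᵐ y ∂ν, ∫⁻ x, ‖k x y * f y‖ₑ ∂μ ≤ ENNReal.ofReal (w y * |f y|) := by
    filter_upwards [hkw] with y hy
    simp only [enorm_mul]
    rw [lintegral_mul_const' _ _ enorm_ne_top, ENNReal.ofReal_mul' (abs_nonneg _),
      ← Real.enorm_eq_ofReal_abs]
    gcongr
  have hlint : ∫⁻ x, ENNReal.ofReal ‖|∫ y, k x y * f y ∂ν|‖ ∂μ
      ≤ ENNReal.ofReal (∫ y, w y * |f y| ∂ν) := calc
    _ ≤ ∫⁻ x, ∫⁻ y, ‖k x y * f y‖ₑ ∂ν ∂μ := lintegral_mono fun x => by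
        rw [norm_abs_eq_norm, ofReal_norm]
        exact enorm_integral_le_lintegral_enorm _
    _ = ∫⁻ y, ∫⁻ x, ‖k x y * f y‖ₑ ∂μ ∂ν :=
        lintegral_lintegral_swap (hk.mul hf.comp_snd).enorm
    _ ≤ ∫⁻ y, ENNReal.ofReal (w y * |f y|) ∂ν := lintegral_mono_ae hinner
    _ = _ := (ofReal_integral_eq_lintegral_ofReal hwf hwf0).symm
  calc ∫ x, |∫ y, k x y * f y ∂ν| ∂μ ≤ ‖∫ x, |∫ y, k x y * f y ∂ν| ∂μ‖ := le_norm_self _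
    _ ≤ (∫⁻ x, ENNReal.ofReal ‖|∫ y, k x y * f y ∂ν|‖ ∂μ).toReal :=
        norm_integral_le_lintegral_norm _
    _ ≤ (ENNReal.ofReal (∫ y, w y * |f y| ∂ν)).toReal :=
        ENNReal.toReal_mono ENNReal.ofReal_ne_top hlint
    _ = ∫ y, w y * |f y| ∂ν :=
        ENNReal.toReal_ofReal (integral_nonneg_of_ae hwf0)

noncomputable def greenIntegrand (n : ℕ) (s t : ℝ) : ℝ := t ^ (s - 1) * (1 + t) ^ (-(n : ℝ) / 2)

section greenIntegrand

variable {n : ℕ} {s t ρ : ℝ}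

lemma greenIntegrand_nonneg (ht : 0 ≤ t) : 0 ≤ greenIntegrand n s t := by
  unfold greenIntegrand; positivity

lemma greenIntegrand_le_rpow (ht : 0 ≤ t) : greenIntegrand n s t ≤ t ^ (s - 1) :=
  mul_le_of_le_one_right (rpow_nonneg ht _)
    (rpow_le_one_of_one_le_of_nonpos (by linarith) (by have := n.cast_nonneg (α := ℝ); linarith))

lemma greenIntegrand_le_rpow_of_pos (ht : 0 < t) :
    greenIntegrand n s t ≤ t ^ (s - 1 + -(n : ℝ) / 2) := by
  rw [rpow_add ht]
  exact mul_le_mul_of_nonneg_left (rpow_le_rpow_of_nonpos ht (by linarith)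
    (by have := n.cast_nonneg (α := ℝ); linarith)) (rpow_nonneg ht.le _)

lemma intervalIntegrable_greenIntegrand (hs : 0 < s) (hρ : 0 ≤ ρ) :
    IntervalIntegrable (greenIntegrand n s) volume 0 ρ := by
  refine (intervalIntegral.intervalIntegrable_rpow' (r := s - 1) (by linarith)).mono_fun
    (by unfold greenIntegrand; fun_prop) ?_
  rw [uIoc_of_le hρ]
  filter_upwards [ae_restrict_mem measurableSet_Ioc] with t ht
  rw [norm_of_nonneg (greenIntegrand_nonneg ht.1.le), norm_of_nonneg (rpow_nonneg ht.1.le _)]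
  exact greenIntegrand_le_rpow ht.1.le

lemma integrableOn_Ioi_greenIntegrand (hs : 0 < s) (hn : 2 * s < n) :
    IntegrableOn (greenIntegrand n s) (Ioi 0) := by
  rw [← Ioc_union_Ioi_eq_Ioi zero_le_one]
  refine IntegrableOn.union ?_ ?_
  · exact (intervalIntegrable_iff_integrableOn_Ioc_of_le zero_le_one).1
      (intervalIntegrable_greenIntegrand hs zero_le_one)
  · refine (integrableOn_Ioi_rpow_of_lt (a := s - 1 + -(n : ℝ) / 2) (by linarith) one_pos).mono'
      (by unfold greenIntegrand; fun_prop) ?_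
    filter_upwards [ae_restrict_mem measurableSet_Ioi] with t ht
    rw [norm_of_nonneg (greenIntegrand_nonneg (zero_le_one.trans ht.le))]
    exact greenIntegrand_le_rpow_of_pos (zero_lt_one.trans ht)

lemma integral_greenIntegrand_le_rpow_div (hs : 0 < s) (hρ : 0 ≤ ρ) :
    ∫ t in 0..ρ, greenIntegrand n s t ≤ ρ ^ s / s := by
  calc ∫ t in 0..ρ, greenIntegrand n s t ≤ ∫ t in 0..ρ, t ^ (s - 1) :=
        intervalIntegral.integral_mono_on hρ (intervalIntegrable_greenIntegrand hs hρ)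
          (intervalIntegral.intervalIntegrable_rpow' (by linarith))
          fun t ht => greenIntegrand_le_rpow ht.1
    _ = ρ ^ s / s := by
        rw [integral_rpow (Or.inl (by linarith)), sub_add_cancel, zero_rpow hs.ne', sub_zero]

lemma integral_greenIntegrand_le_integral_Ioi (hs : 0 < s) (hn : 2 * s < n) (hρ : 0 ≤ ρ) :
    ∫ t in 0..ρ, greenIntegrand n s t ≤ ∫ t in Ioi 0, greenIntegrand n s t := by
  rw [intervalIntegral.integral_of_le hρ]
  exact setIntegral_mono_set (integrableOn_Ioi_greenIntegrand hs hn)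
    ((ae_restrict_mem measurableSet_Ioi).mono fun t ht => greenIntegrand_nonneg (le_of_lt ht))
    Ioc_subset_Ioi_self.eventuallyLE

noncomputable def greenConst (n : ℕ) (s : ℝ) : ℝ :=
  max (∫ t in Ioi 0, greenIntegrand n s t) (8 ^ s / s)

lemma integral_greenIntegrand_le (hs : 0 < s) (hn : 2 * s < n) (hρ : 0 ≤ ρ) {τ : ℝ}
    (hτ : 0 ≤ τ) (hρτ : ρ ≤ 4 * τ * (τ + 1)) :
    ∫ t in 0..ρ, greenIntegrand n s t ≤ greenConst n s * τ ^ s := by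
  rcases le_or_gt 1 τ with hτ1 | hτ1
  · calc ∫ t in 0..ρ, greenIntegrand n s t ≤ greenConst n s :=
          (integral_greenIntegrand_le_integral_Ioi hs hn hρ).trans (le_max_left _ _)
      _ ≤ greenConst n s * τ ^ s :=
          le_mul_of_one_le_right ((by positivity : (0:ℝ) ≤ 8 ^ s / s).trans (le_max_right _ _))
            (one_le_rpow hτ1 hs.le)
  · calc ∫ t in 0..ρ, greenIntegrand n s t ≤ ρ ^ s / s := integral_greenIntegrand_le_rpow_div hs hρ
      _ ≤ (8 * τ) ^ s / s := by gcongr; nlinarith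
      _ = 8 ^ s / s * τ ^ s := by rw [mul_rpow (by norm_num) hτ]; ring
      _ ≤ greenConst n s * τ ^ s := by gcongr; exact le_max_right _ _

end greenIntegrand

lemma one_sub_sq_mul_one_sub_sq_le {E : Type*} [SeminormedAddCommGroup E] {x y : E}
    (hx : ‖x‖ ≤ 1) (hy : ‖y‖ ≤ 1) :
    (1 - ‖x‖ ^ 2) * (1 - ‖y‖ ^ 2) ≤ 4 * (1 - ‖y‖) * (1 - ‖y‖ + ‖x - y‖) := by
  have hxy : ‖y‖ - ‖x‖ ≤ ‖x - y‖ := by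
    rw [norm_sub_rev]; exact norm_sub_norm_le y x
  have h1 : 1 - ‖x‖ ^ 2 ≤ 2 * (1 - ‖y‖ + ‖x - y‖) := by nlinarith [norm_nonneg x]
  have h2 : 1 - ‖y‖ ^ 2 ≤ 2 * (1 - ‖y‖) := by nlinarith [norm_nonneg y]
  calc (1 - ‖x‖ ^ 2) * (1 - ‖y‖ ^ 2) ≤ (2 * (1 - ‖y‖ + ‖x - y‖)) * (2 * (1 - ‖y‖)) :=
        mul_le_mul h1 h2 (by nlinarith [norm_nonneg y]) (by nlinarith [norm_nonneg x])
    _ = 4 * (1 - ‖y‖) * (1 - ‖y‖ + ‖x - y‖) := by ring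

noncomputable def greenRho {n : ℕ} (x y : EuclideanSpace ℝ (Fin n)) : ℝ :=
  (1 - ‖x‖ ^ 2) * (1 - ‖y‖ ^ 2) / ‖x - y‖ ^ 2

section greenKer

variable {n : ℕ} {s : ℝ} {x y : EuclideanSpace ℝ (Fin n)}

lemma greenKer_eq :
    greenKer n s x y = ‖x - y‖ ^ (2 * s - n) * ∫ t in 0..greenRho x y, greenIntegrand n s t :=
  rfl

lemma greenRho_nonneg (hx : ‖x‖ ≤ 1) (hy : ‖y‖ ≤ 1) : 0 ≤ greenRho x y := by
  unfold greenRho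
  have := mul_le_mul hx hx (norm_nonneg x) zero_le_one
  have := mul_le_mul hy hy (norm_nonneg y) zero_le_one
  exact div_nonneg (mul_nonneg (by nlinarith) (by nlinarith)) (sq_nonneg _)

lemma greenRho_le (hx : ‖x‖ ≤ 1) (hy : ‖y‖ ≤ 1) (hxy : x ≠ y) :
    greenRho x y ≤ 4 * ((1 - ‖y‖) / ‖x - y‖) * ((1 - ‖y‖) / ‖x - y‖ + 1) := by
  have hr : 0 < ‖x - y‖ := norm_sub_pos_iff.2 hxy
  calc greenRho x y ≤ 4 * (1 - ‖y‖) * (1 - ‖y‖ + ‖x - y‖) / ‖x - y‖ ^ 2 := by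
        unfold greenRho
        exact div_le_div_of_nonneg_right (one_sub_sq_mul_one_sub_sq_le hx hy) (sq_nonneg _)
    _ = _ := by field_simp

lemma greenKer_nonneg (hx : ‖x‖ ≤ 1) (hy : ‖y‖ ≤ 1) : 0 ≤ greenKer n s x y := by
  rw [greenKer_eq]
  exact mul_nonneg (rpow_nonneg (norm_nonneg _) _) (intervalIntegral.integral_nonneg
    (greenRho_nonneg hx hy) fun t ht => greenIntegrand_nonneg ht.1)

lemma greenKer_le (hs : 0 < s) (hn : 2 * s < n) (hx : ‖x‖ ≤ 1) (hy : ‖y‖ ≤ 1) :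
    greenKer n s x y ≤ greenConst n s * (1 - ‖y‖) ^ s * ‖x - y‖ ^ (s - n) := by
  rcases eq_or_ne x y with rfl | hxy
  -- both sides vanish on the diagonal, since `0 ^ a = 0` for `a ≠ 0`
  · rw [greenKer_eq, sub_self, norm_zero, zero_rpow (by linarith), zero_rpow (by linarith),
      zero_mul, mul_zero]
  have hr : 0 < ‖x - y‖ := norm_sub_pos_iff.2 hxy
  have hd : 0 ≤ 1 - ‖y‖ := sub_nonneg.2 hy
  calc greenKer n s x y
      ≤ ‖x - y‖ ^ (2 * s - n) * (greenConst n s * ((1 - ‖y‖) / ‖x - y‖) ^ s) := by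
        rw [greenKer_eq]
        gcongr
        exact integral_greenIntegrand_le hs hn (greenRho_nonneg hx hy) (by positivity)
          (greenRho_le hx hy hxy)
    _ = greenConst n s * (1 - ‖y‖) ^ s * ‖x - y‖ ^ (s - n) := by
        rw [div_rpow hd hr.le, show s - n = 2 * s - n - s by ring, rpow_sub hr (2 * s - n) s]
        ring

end greenKer

lemma setLIntegral_ball_comp_sub_le {E : Type*} [NormedAddCommGroup E] [MeasurableSpace E]
    [BorelSpace E] (μ : Measure E) [μ.IsAddRightInvariant] (φ : E → ℝ≥0∞) {y : E} {r R : ℝ}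
    (h : r + ‖y‖ ≤ R) : ∫⁻ x in ball 0 r, φ (x - y) ∂μ ≤ ∫⁻ z in ball 0 R, φ z ∂μ :=
  calc ∫⁻ x in ball 0 r, φ (x - y) ∂μ ≤ ∫⁻ x in (· - y) ⁻¹' ball 0 R, φ (x - y) ∂μ :=
        lintegral_mono_set fun x hx => by
          rw [mem_ball_zero_iff] at hx
          rw [mem_preimage, mem_ball_zero_iff]
          exact (norm_sub_le x y).trans_lt (by linarith)
    _ = ∫⁻ z in ball 0 R, φ z ∂μ :=
        (measurePreserving_sub_right μ y).setLIntegral_comp_preimage_emb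
          (measurableEmbedding_subRight y) φ _

lemma setLIntegral_ball_rpow_norm_lt_top {E : Type*} [NormedAddCommGroup E] [NormedSpace ℝ E]
    [FiniteDimensional ℝ E] [MeasurableSpace E] [BorelSpace E] (μ : Measure E)
    [μ.IsAddHaarMeasure] (hE : 1 ≤ Module.finrank ℝ E) {a : ℝ}
    (ha : -(Module.finrank ℝ E : ℝ) < a) (R : ℝ) :
    ∫⁻ z in ball 0 R, ENNReal.ofReal (‖z‖ ^ a) ∂μ < ∞ := by
  refine (integrableOn_ball_of_norm_le_rpow (C := 1) (α := -a) hE (by linarith)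
    (ae_of_all _ fun z => ?_)
    (continuous_norm.measurable.pow_const a).aestronglyMeasurable).lintegral_lt_top
  rw [neg_neg, one_mul, norm_of_nonneg (rpow_nonneg (norm_nonneg z) a)]

section greenL1

variable {n : ℕ} {s : ℝ}

lemma greenConst_pos (hs : 0 < s) : 0 < greenConst n s :=
  (by positivity : (0 : ℝ) < 8 ^ s / s).trans_le (le_max_right _ _)

noncomputable def greenL1Const (n : ℕ) (s : ℝ) : ℝ :=
  greenConst n s *
    (∫⁻ z in ball (0 : EuclideanSpace ℝ (Fin n)) 2, ENNReal.ofReal (‖z‖ ^ (s - n))).toReal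

lemma setLIntegral_greenKer_le (hs : 0 < s) (hn : 2 * s < n) {y : EuclideanSpace ℝ (Fin n)}
    (hy : ‖y‖ ≤ 1) :
    ∫⁻ x in ball 0 1, ‖greenKer n s x y‖ₑ ≤ ENNReal.ofReal (greenL1Const n s * (1 - ‖y‖) ^ s) := by
  have hK : 0 ≤ greenConst n s * (1 - ‖y‖) ^ s :=
    mul_nonneg (greenConst_pos hs).le (rpow_nonneg (sub_nonneg.2 hy) _)
  have hfin := setLIntegral_ball_rpow_norm_lt_top (volume : Measure (EuclideanSpace ℝ (Fin n)))
    (a := s - n) (by rw [finrank_euclideanSpace_fin]; exact_mod_cast (by linarith : (0 : ℝ) < n))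
    (by rw [finrank_euclideanSpace_fin]; linarith) 2
  calc ∫⁻ x in ball (0 : EuclideanSpace ℝ (Fin n)) 1, ‖greenKer n s x y‖ₑ
      ≤ ∫⁻ x in ball 0 1, ENNReal.ofReal (greenConst n s * (1 - ‖y‖) ^ s) *
          ENNReal.ofReal (‖x - y‖ ^ (s - n)) := by
        refine setLIntegral_mono' measurableSet_ball fun x hx => ?_
        rw [mem_ball_zero_iff] at hx
        rw [Real.enorm_of_nonneg (greenKer_nonneg hx.le hy), ← ENNReal.ofReal_mul hK]
        exact ENNReal.ofReal_le_ofReal (greenKer_le hs hn hx.le hy)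
    _ = ENNReal.ofReal (greenConst n s * (1 - ‖y‖) ^ s) *
          ∫⁻ x in ball 0 1, ENNReal.ofReal (‖x - y‖ ^ (s - n)) :=
        lintegral_const_mul' _ _ ENNReal.ofReal_ne_top
    _ ≤ ENNReal.ofReal (greenConst n s * (1 - ‖y‖) ^ s) *
          ∫⁻ z in ball (0 : EuclideanSpace ℝ (Fin n)) 2, ENNReal.ofReal (‖z‖ ^ (s - n)) := by
        refine mul_le_mul_right ?_ _
        exact setLIntegral_ball_comp_sub_le volume (fun z => ENNReal.ofReal (‖z‖ ^ (s - n)))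
          (by linarith)
    _ = ENNReal.ofReal (greenL1Const n s * (1 - ‖y‖) ^ s) := by
        rw [← ENNReal.ofReal_toReal hfin.ne, ← ENNReal.ofReal_mul hK, greenL1Const]
        ring_nf

lemma aemeasurable_uncurry_greenKer (hs : 0 < s) (hn : 2 * s < n) :
    AEMeasurable (Function.uncurry (greenKer n s))
      ((volume.restrict (ball (0 : EuclideanSpace ℝ (Fin n)) 1)).prod
        (volume.restrict (ball 0 1))) := by
  -- `greenIntegrand` is not integrable near `t = -1`, so take the primitive of its restriction
  -- to `(0, ∞)`: it is continuous on all of `ℝ`.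
  set P : ℝ → ℝ := fun u => ∫ t in 0..u, (Ioi 0).indicator (greenIntegrand n s) t
  have hP : Continuous P := intervalIntegral.continuous_primitive (fun _ _ =>
    ((integrableOn_Ioi_greenIntegrand hs hn).integrable_indicator
      measurableSet_Ioi).intervalIntegrable) 0
  rw [Measure.prod_restrict]
  refine (Measurable.aemeasurable (f := fun p => ‖p.1 - p.2‖ ^ (2 * s - n) *
    P (greenRho p.1 p.2)) ?_).congr ?_
  · unfold greenRho
    have := hP.measurable
    fun_prop
  refine ae_restrict_of_forall_mem (measurableSet_ball.prod measurableSet_ball) fun p hp => ?_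
  simp only [mem_prod, mem_ball_zero_iff] at hp
  rw [Function.uncurry_apply_pair, greenKer_eq]
  simp only [P]
  congr 1
  refine intervalIntegral.integral_congr_ae (ae_of_all _ fun t ht => ?_)
  rw [uIoc_of_le (greenRho_nonneg hp.1.le hp.2.le)] at ht
  exact indicator_of_mem ht.1 _

end greenL1

theorem stmt5_general (n : ℕ) (s : ℝ) (hs0 : 0 < s) (hn : 2 * s < (n : ℝ)) :
    ∃ C : ℝ, 0 < C ∧ ∀ f : EuclideanSpace ℝ (Fin n) → ℝ,
      Measurable f →
      IntegrableOn (fun y => (1 - ‖y‖) ^ s * |f y|)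
        (ball (0 : EuclideanSpace ℝ (Fin n)) 1) →
      ∫ x in ball (0 : EuclideanSpace ℝ (Fin n)) 1,
          |∫ y in ball (0 : EuclideanSpace ℝ (Fin n)) 1, greenKer n s x y * f y|
        ≤ C * ∫ y in ball (0 : EuclideanSpace ℝ (Fin n)) 1, (1 - ‖y‖) ^ s * |f y| := by
  set C := max (greenL1Const n s) 1
  refine ⟨C, lt_max_of_lt_right one_pos, fun f hf hfw => ?_⟩
  have hweight : ∀ᵐ y ∂volume.restrict (ball (0 : EuclideanSpace ℝ (Fin n)) 1),
      ‖y‖ ≤ 1 ∧ 0 ≤ C * (1 - ‖y‖) ^ s :=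
    ae_restrict_of_forall_mem measurableSet_ball fun y hy => by
      rw [mem_ball_zero_iff] at hy
      exact ⟨hy.le, mul_nonneg (zero_le_one.trans (le_max_right _ _))
        (rpow_nonneg (sub_nonneg.2 hy.le) _)⟩
  rw [← integral_const_mul]
  simp only [← mul_assoc]
  refine integral_abs_integral_mul_le (aemeasurable_uncurry_greenKer hs0 hn) hf.aemeasurable
    ?_ (hweight.mono fun y hy => hy.2) (by simpa only [mul_assoc] using hfw.const_mul C)
  filter_upwards [hweight] with y hy
  exact (setLIntegral_greenKer_le hs0 hn hy.1).trans (ENNReal.ofReal_le_ofReal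
    (mul_le_mul_of_nonneg_right (le_max_left _ _) (rpow_nonneg (sub_nonneg.2 hy.1) _)))

/-- Let `0 < s < 1` and `n > 2s`. There is `C > 0` depending only on `n, s`
such that for every measurable `f : B₁ → ℝ` with `∫_{B₁} (1-|y|)^s |f(y)| dy < ∞`, the
Green potential satisfies `∫_{B₁} |(G*f)(x)| dx ≤ C ∫_{B₁} (1-|y|)^s |f(y)| dy`. -/
theorem stmt5 (n : ℕ) (s : ℝ) (hs0 : 0 < s) (hs1 : s < 1) (hn : 2 * s < (n : ℝ)) :
    ∃ C : ℝ, 0 < C ∧ ∀ f : EuclideanSpace ℝ (Fin n) → ℝ,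
      Measurable f →
      IntegrableOn (fun y => (1 - ‖y‖) ^ s * |f y|)
        (ball (0 : EuclideanSpace ℝ (Fin n)) 1) →
      ∫ x in ball (0 : EuclideanSpace ℝ (Fin n)) 1,
          |∫ y in ball (0 : EuclideanSpace ℝ (Fin n)) 1, greenKer n s x y * f y|
        ≤ C * ∫ y in ball (0 : EuclideanSpace ℝ (Fin n)) 1, (1 - ‖y‖) ^ s * |f y| :=
  stmt5_general n s hs0 hn
end
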